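/- Suppose h = 1/4 and let E₁ = (1/2, 0), J = the matrix [[0, −q/2], [0, −s·m]] of the Fréchet derivative of F at E₁, v = (1, 0) and w = (2s·m, −q). Then: (i) J·v = 0 and Jᵀ·w = 0, i.e. v and w are eigenvectors of J and Jᵀ for the eigenvalue 0; (ii) the partial derivative of F with respect to the parameter h at (E₁, 1/4) is the constant vector (−1, 0), and w·(−1, 0) = −2s·m ≠ 0; (iii) the second directional derivative D²F(E₁)(v, v) equals (−2, 0), and w·(−2, 0) = −4s·m ≠ 0. (These are Sotomayor's transversality conditions for a saddle-node bifurcation of the system at E₁ at the critical parameter value h₂ = 1/4.) -/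

import Mathlib

/-- The predator–prey vector field
    `F(x,y) = (x(1-x) - q x y - h, s y (1 - y/x)(y - m))`. -/
noncomputable def F (q s h m : ℝ) (p : ℝ × ℝ) : ℝ × ℝ :=
  (p.1 * (1 - p.1) - q * p.1 * p.2 - h, s * p.2 * (1 - p.2 / p.1) * (p.2 - m))

/-- The continuous linear map `ℝ² → ℝ²` with matrix `[[a, b], [c, d]]`. -/
noncomputable def clm (a b c d : ℝ) : (ℝ × ℝ) →L[ℝ] (ℝ × ℝ) :=
  (a • ContinuousLinearMap.fst ℝ ℝ ℝ + b • ContinuousLinearMap.snd ℝ ℝ ℝ).prod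
    (c • ContinuousLinearMap.fst ℝ ℝ ℝ + d • ContinuousLinearMap.snd ℝ ℝ ℝ)

/-! The first-order conditions are direct computations of partial derivatives. For the
second-order one: `F` is smooth away from the `y`-axis and on the `x`-axis reduces to
`F (x, 0) = (x (1 - x) - h, 0)`, so `D²F (x, 0) (e₁, e₁)` is the second derivative of
`t ↦ ((x + t) (1 - x - t) - h, 0)`, namely `(-2, 0)`. -/

section SecondDirectionalDerivative

variable {𝕜 : Type*} [NontriviallyNormedField 𝕜] {E G : Type*} [NormedAddCommGroup E]
  [NormedSpace 𝕜 E] [NormedAddCommGroup G] [NormedSpace 𝕜 G]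

theorem iteratedFDeriv_two_apply_eq_iteratedDeriv_line {f : E → G} {x : E}
    (hf : ContDiffAt 𝕜 2 f x) (v : E) :
    iteratedFDeriv 𝕜 2 f x ![v, v] = iteratedDeriv 2 (fun t : 𝕜 => f (x + t • v)) 0 := by
  set γ : 𝕜 → E := fun t => x + t • v
  have hγ (t : 𝕜) : HasDerivAt γ v t := by
    have hsmul : HasDerivAt (fun t : 𝕜 => t • v) v t := by
      simpa using (hasDerivAt_id' t).smul_const v
    exact hsmul.const_add x
  have hγ0 : γ 0 = x := by simp [γ]
  have hγ_tendsto : Filter.Tendsto γ (nhds 0) (nhds x) := by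
    simpa [hγ0] using (hγ 0).continuousAt.tendsto
  have hderiv : deriv (f ∘ γ) =ᶠ[nhds 0] fun t => fderiv 𝕜 f (γ t) v := by
    filter_upwards [hγ_tendsto.eventually (hf.eventually (by simp))] with t ht
    exact ((ht.differentiableAt (by simp)).hasFDerivAt.comp_hasDerivAt t (hγ t)).deriv
  have hf' : HasFDerivAt (fderiv 𝕜 f) (fderiv 𝕜 (fderiv 𝕜 f) x) (γ 0) := by
    rw [hγ0]
    exact ((hf.fderiv_right (m := 1) (by norm_num)).differentiableAt (by simp)).hasFDerivAt
  have hline : HasDerivAt (fun t => fderiv 𝕜 f (γ t) v) (fderiv 𝕜 (fderiv 𝕜 f) x v v) 0 := by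
    simpa using (hf'.comp_hasDerivAt 0 (hγ 0)).clm_apply (hasDerivAt_const 0 v)
  rw [iteratedFDeriv_two_apply, iteratedDeriv_succ, iteratedDeriv_one]
  exact (hderiv.deriv_eq.trans hline.deriv).symm

end SecondDirectionalDerivative

section PredatorPrey

variable (q s h m : ℝ)

lemma clm_apply (a b c d : ℝ) (w : ℝ × ℝ) :
    clm a b c d w = (a * w.1 + b * w.2, c * w.1 + d * w.2) := by
  simp [clm]

theorem hasFDerivAt_F {p : ℝ × ℝ} (hp : p.1 ≠ 0) :
    HasFDerivAt (F q s h m)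
      (clm (1 - 2 * p.1 - q * p.2) (-(q * p.1)) (s * p.2 ^ 2 * (p.2 - m) / p.1 ^ 2)
        (s * (1 - 2 * p.2 / p.1) * (p.2 - m) + s * p.2 * (1 - p.2 / p.1))) p := by
  have hx : HasFDerivAt (fun p : ℝ × ℝ => p.1) (ContinuousLinearMap.fst ℝ ℝ ℝ) p :=
    hasFDerivAt_fst
  have hy : HasFDerivAt (fun p : ℝ × ℝ => p.2) (ContinuousLinearMap.snd ℝ ℝ ℝ) p :=
    hasFDerivAt_snd
  have hprey := ((hx.mul (hx.const_sub 1)).sub ((hx.const_mul q).mul hy)).sub_const h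
  have hratio : HasFDerivAt (fun p : ℝ × ℝ => p.2 / p.1) _ p :=
    hy.mul ((hasDerivAt_inv hp).comp_hasFDerivAt p hx)
  have hpred := ((hy.const_mul s).mul (hratio.const_sub 1)).mul (hy.sub_const m)
  refine (hprey.prodMk hpred).congr_fderiv (ContinuousLinearMap.ext fun w => ?_)
  rw [clm_apply]
  simp only [smul_neg, Pi.mul_apply, neg_smul, neg_add_rev, neg_neg, smul_add,
    ContinuousLinearMap.prod_apply, sub_apply, add_apply,
    neg_apply, smul_apply, ContinuousLinearMap.coe_fst',
    smul_eq_mul, ContinuousLinearMap.coe_snd', neg_mul, Prod.mk.injEq]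
  constructor
  · ring
  · field_simp
    ring

theorem contDiffAt_F {n : WithTop ℕ∞} {p : ℝ × ℝ} (hp : p.1 ≠ 0) :
    ContDiffAt ℝ n (F q s h m) p := by
  unfold F
  fun_prop (disch := exact hp)

theorem F_mk_zero (x : ℝ) : F q s h m (x, 0) = (x * (1 - x) - h, 0) := by
  simp [F]

theorem hasDerivAt_F_param (p : ℝ × ℝ) :
    HasDerivAt (fun h' => F q s h' m p) (-1, 0) h :=
  ((hasDerivAt_id h).const_sub _).prodMk (hasDerivAt_const h _)

theorem iteratedFDeriv_two_F_mk_zero {x : ℝ} (hx : x ≠ 0) :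
    iteratedFDeriv ℝ 2 (F q s h m) (x, 0) ![(1, 0), (1, 0)] = (-2, 0) := by
  have hline : (fun t : ℝ => F q s h m ((x, 0) + t • (1, 0)))
      = fun t => ((x + t) * (1 - (x + t)) - h, 0) := by
    funext t
    simpa using F_mk_zero q s h m (x + t)
  have hderiv (t : ℝ) :
      HasDerivAt (fun t : ℝ => ((x + t) * (1 - (x + t)) - h, (0 : ℝ))) (1 - 2 * (x + t), 0) t := by
    have hshift := (hasDerivAt_id' t).const_add x
    convert ((hshift.mul (hshift.const_sub 1)).sub_const h).prodMk (hasDerivAt_const t (0 : ℝ))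
      using 2
    simp only [Pi.mul_apply]
    ring
  have hderiv2 : HasDerivAt (fun t : ℝ => (1 - 2 * (x + t), (0 : ℝ))) (-2, 0) 0 := by
    convert (((hasDerivAt_id' 0).const_add x).const_mul 2 |>.const_sub 1).prodMk
      (hasDerivAt_const (0 : ℝ) (0 : ℝ)) using 2
    norm_num
  rw [iteratedFDeriv_two_apply_eq_iteratedDeriv_line (contDiffAt_F q s h m hx), hline,
    iteratedDeriv_succ, iteratedDeriv_one, funext fun t => (hderiv t).deriv, hderiv2.deriv]

end PredatorPrey

theorem stmt18_general (q s h m : ℝ) (hs : 0 < s) (hm0 : 0 < m) :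
    HasFDerivAt (F q s h m) (clm 0 (-q/2) 0 (-s*m)) ((1/2 : ℝ), (0 : ℝ)) ∧
    (!![0, -q/2; 0, -s*m] : Matrix (Fin 2) (Fin 2) ℝ).mulVec ![1, 0] = 0 ∧
    (!![0, -q/2; 0, -s*m] : Matrix (Fin 2) (Fin 2) ℝ).transpose.mulVec ![2*s*m, -q]
      = 0 ∧
    HasDerivAt (fun h' : ℝ => F q s h' m ((1/2 : ℝ), (0 : ℝ)))
      (((-1 : ℝ), (0 : ℝ))) (1/4) ∧
    dotProduct ![2*s*m, -q] ![(-1 : ℝ), 0] = -2*s*m ∧ -2*s*m ≠ 0 ∧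
    iteratedFDeriv ℝ 2 (F q s h m) ((1/2 : ℝ), (0 : ℝ))
      ![((1 : ℝ), (0 : ℝ)), ((1 : ℝ), (0 : ℝ))] = ((-2 : ℝ), (0 : ℝ)) ∧
    dotProduct ![2*s*m, -q] ![(-2 : ℝ), 0] = -4*s*m ∧ -4*s*m ≠ 0 := by
  have hE₁ : ((1/2 : ℝ), (0 : ℝ)).1 ≠ 0 := by norm_num
  refine ⟨?_, ?_, ?_, hasDerivAt_F_param q s _ m _, ?_, ?_,
    iteratedFDeriv_two_F_mk_zero q s h m hE₁, ?_, ?_⟩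
  · convert hasFDerivAt_F q s h m hE₁ using 2 <;> norm_num; ring
  · ext i; fin_cases i <;> simp
  · ext i; fin_cases i <;> simp; ring
  · simp
  · simp [hs.ne', hm0.ne']
  · simp; ring
  · simp [hs.ne', hm0.ne']

/-- Sotomayor's transversality conditions for a saddle-node bifurcation of the family
`F q s h m` at `E₁ = (1/2, 0)` at the critical parameter value `h₂ = 1/4`: with
`J = [[0, -q/2], [0, -s m]]` the matrix of the Fréchet derivative of `F` at `E₁`,
`v = (1, 0)`, `w = (2 s m, -q)`: (i) `J v = 0` and `Jᵀ w = 0`; (ii) the derivative of `F`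
in the parameter `h` at `(E₁, 1/4)` is `(-1, 0)` and `w ⬝ (-1, 0) = -2 s m ≠ 0`;
(iii) `D²F(E₁)((1,0),(1,0)) = (-2, 0)` and `w ⬝ (-2, 0) = -4 s m ≠ 0`. -/
theorem stmt18 (q s h m : ℝ) (hq : 0 < q) (hs : 0 < s) (hh : 0 < h)
    (hm0 : 0 < m) (hm1 : m < 1) (hh4 : h = 1/4) :
    HasFDerivAt (F q s h m) (clm 0 (-q/2) 0 (-s*m)) ((1/2 : ℝ), (0 : ℝ)) ∧
    (!![0, -q/2; 0, -s*m] : Matrix (Fin 2) (Fin 2) ℝ).mulVec ![1, 0] = 0 ∧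
    (!![0, -q/2; 0, -s*m] : Matrix (Fin 2) (Fin 2) ℝ).transpose.mulVec ![2*s*m, -q]
      = 0 ∧
    HasDerivAt (fun h' : ℝ => F q s h' m ((1/2 : ℝ), (0 : ℝ)))
      (((-1 : ℝ), (0 : ℝ))) (1/4) ∧
    dotProduct ![2*s*m, -q] ![(-1 : ℝ), 0] = -2*s*m ∧ -2*s*m ≠ 0 ∧
    iteratedFDeriv ℝ 2 (F q s h m) ((1/2 : ℝ), (0 : ℝ))
      ![((1 : ℝ), (0 : ℝ)), ((1 : ℝ), (0 : ℝ))] = ((-2 : ℝ), (0 : ℝ)) ∧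
    dotProduct ![2*s*m, -q] ![(-2 : ℝ), 0] = -4*s*m ∧ -4*s*m ≠ 0 :=
  stmt18_general q s h m hs hm0
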